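/- Let A ⊆ ℝ² be a finite set with distinct pairwise distances, and let e_1 ≤ e_2 ≤ … ≤ e_{n−1} be the edge lengths of its Euclidean minimum spanning tree. For r ≥ 0, the number of connected components of the graph on A with edges {a,b} of length ‖a−b‖ ≤ 2r equals n minus the number of MST edges of length at most 2r. Hence the sum over all components-merging events of the merge radii equals half the total length of the MST. -/

import Mathlib

open scoped Classical

noncomputable section

/-- Points of the Euclidean plane. -/
abbrev Pt := EuclideanSpace ℝ (Fin 2)

/-- The Euclidean length of a potential edge on points of `S`. -/
noncomputable def edgeLen (S : Finset Pt) : Sym2 S → ℝ :=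
  Sym2.lift ⟨fun (a b : S) => dist (a : Pt) (b : Pt), fun a b => dist_comm (a : Pt) (b : Pt)⟩

/-- The edges of a graph on the points of `S`, as a finset. -/
noncomputable def edgesOf (S : Finset Pt) (T : SimpleGraph S) : Finset (Sym2 S) :=
  Finset.univ.filter (· ∈ T.edgeSet)

/-- The total Euclidean edge length of a graph on the points of `S`. -/
noncomputable def treeCost (S : Finset Pt) (T : SimpleGraph S) : ℝ :=
  ∑ e ∈ edgesOf S T, edgeLen S e

/-!
An exchange argument gives the cycle property of a minimum spanning tree `T`: every edge on the
`T`-path between `a` and `b` is at most as long as `dist a b` (otherwise swapping it for the edge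
`ab` would give a cheaper spanning tree). Hence `a` and `b` are joined by a chain of pairs at
distance `≤ t` iff they are joined by `T`-edges of length `≤ t`, so the threshold graph has the
same components as the forest of short `T`-edges, and a forest on `n` vertices with `k` edges has
`n - k` components.
-/

namespace SimpleGraph

variable {V : Type*} {G H : SimpleGraph V}

theorem Reachable.of_forall_adj_reachable (h : ∀ a b, G.Adj a b → H.Reachable a b) {u v : V}
    (huv : G.Reachable u v) : H.Reachable u v := by
  rw [reachable_iff_reflTransGen] at huv ⊢
  exact huv.lift' id fun a b hab => (reachable_iff_reflTransGen a b).mp (h a b hab)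

theorem reachable_sup_edge (u v : V) : (G ⊔ edge u v).Reachable u v := by
  rcases eq_or_ne u v with rfl | huv
  · rfl
  · exact Adj.reachable (Or.inr (by simp [edge_adj, huv]))

theorem Reachable.sup_edge_cases {x y a b : V} (h : (G ⊔ edge x y).Reachable a b) :
    G.Reachable a b ∨ (G.Reachable a x ∧ G.Reachable y b) ∨
      (G.Reachable a y ∧ G.Reachable x b) := by
  obtain ⟨p⟩ := h
  induction p with
  | nil => exact .inl .rfl
  | @cons a w b hadj _ ih =>
    rcases hadj with hG | hxy
    · have := hG.reachable
      grind [Reachable.trans]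
    · rw [edge_adj] at hxy
      grind [Reachable.trans, Reachable.symm, Reachable.refl]

theorem deleteEdges_sup_edge_of_adj {u v : V} (h : G.Adj u v) :
    G.deleteEdges {s(u, v)} ⊔ edge u v = G := by
  ext a b
  simp only [sup_adj, deleteEdges_adj, edge_adj, Set.mem_singleton_iff, Sym2.eq_iff]
  grind [Adj.ne, Adj.symm]

theorem card_connectedComponent_sup_edge_add_one [Finite V] {u v : V}
    (huv : ¬G.Reachable u v) :
    Nat.card (G ⊔ edge u v).ConnectedComponent + 1 = Nat.card G.ConnectedComponent := by
  let ψ : {c : G.ConnectedComponent // c ≠ G.connectedComponentMk v} →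
      (G ⊔ edge u v).ConnectedComponent := fun c => c.1.map (Hom.ofLE le_sup_left)
  have hψ : Function.Bijective ψ := by
    constructor
    · rintro ⟨c, hc⟩ ⟨d, hd⟩ hcd
      induction c using ConnectedComponent.ind with | _ a =>
      induction d using ConnectedComponent.ind with | _ b =>
      simp only [ψ, ConnectedComponent.map_mk, Hom.coe_ofLE, id, ConnectedComponent.eq] at hcd
      simp only [ne_eq, ConnectedComponent.eq, Subtype.mk.injEq] at hc hd ⊢
      grind [Reachable.sup_edge_cases, Reachable.trans, Reachable.symm]
    · intro c
      induction c using ConnectedComponent.ind with | _ a =>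
      by_cases ha : G.Reachable a v
      · refine ⟨⟨G.connectedComponentMk u, by simpa [ConnectedComponent.eq] using huv⟩, ?_⟩
        simp only [ψ, ConnectedComponent.map_mk, Hom.coe_ofLE, id, ConnectedComponent.eq]
        exact (reachable_sup_edge u v).trans (ha.mono le_sup_left).symm
      · exact ⟨⟨G.connectedComponentMk a, by simpa [ConnectedComponent.eq] using ha⟩, rfl⟩
  classical
  have := Fintype.ofFinite G.ConnectedComponent
  have : 0 < Fintype.card G.ConnectedComponent :=
    Fintype.card_pos_iff.mpr ⟨G.connectedComponentMk v⟩
  rw [← Nat.card_congr (Equiv.ofBijective ψ hψ), Nat.card_eq_fintype_card,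
    Fintype.card_subtype_compl, Fintype.card_subtype_eq, Nat.card_eq_fintype_card]
  omega

theorem card_connectedComponent_eq_of_reachable_iff
    (h : ∀ a b, G.Reachable a b ↔ H.Reachable a b) :
    Nat.card G.ConnectedComponent = Nat.card H.ConnectedComponent :=
  Nat.card_congr (Quot.congrRight h)

theorem card_connectedComponent_bot :
    Nat.card (⊥ : SimpleGraph V).ConnectedComponent = Nat.card V :=
  (Nat.card_congr (Equiv.ofBijective _
    ⟨fun _ _ h => reachable_bot.mp (ConnectedComponent.exact h), Quot.mk_surjective⟩)).symm

theorem IsAcyclic.card_connectedComponent_add_card_edgeSet [Finite V] (hG : G.IsAcyclic) :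
    Nat.card G.ConnectedComponent + Nat.card G.edgeSet = Nat.card V := by
  induction h : Nat.card G.edgeSet generalizing G with
  | zero =>
    rw [Nat.card_coe_set_eq, Set.ncard_eq_zero, edgeSet_eq_empty] at h
    subst h
    simp [card_connectedComponent_bot]
  | succ n ih =>
    obtain ⟨e, he⟩ : G.edgeSet.Nonempty := Set.nonempty_of_ncard_ne_zero (by simp_all)
    induction e with | h u v =>
    have hbridge : ¬(G.deleteEdges {s(u, v)}).Reachable u v :=
      isAcyclic_iff_forall_isBridge.mp hG he
    have hcard : Nat.card (G.deleteEdges {s(u, v)}).edgeSet = n := by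
      have := Set.ncard_sdiff_singleton_add_one he
      rw [Nat.card_coe_set_eq] at h
      rw [Nat.card_coe_set_eq, edgeSet_deleteEdges]
      omega
    have hmerge := card_connectedComponent_sup_edge_add_one hbridge
    rw [deleteEdges_sup_edge_of_adj he] at hmerge
    have := ih (hG.anti (deleteEdges_le _)) hcard
    omega

theorem IsAcyclic.card_connectedComponent_fromEdgeSet_add_card [Finite V] (hG : G.IsAcyclic)
    {s : Finset (Sym2 V)} (hs : (s : Set (Sym2 V)) ⊆ G.edgeSet) :
    Nat.card (fromEdgeSet (s : Set (Sym2 V))).ConnectedComponent + s.card = Nat.card V := by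
  have hedges : (fromEdgeSet (s : Set (Sym2 V))).edgeSet = s := by
    rw [edgeSet_fromEdgeSet, sdiff_eq_left]
    exact Set.disjoint_left.mpr fun e he => G.not_isDiag_of_mem_edgeSet (hs he)
  have hforest : (fromEdgeSet (s : Set (Sym2 V))).IsAcyclic :=
    hG.anti ((fromEdgeSet_le G).mpr fun e he => hs he.1)
  have := hforest.card_connectedComponent_add_card_edgeSet
  rwa [hedges, Nat.card_coe_set_eq, Set.ncard_coe_finset] at this

theorem IsAcyclic.not_reachable_deleteEdges_of_mem_edges (hG : G.IsAcyclic) {u v : V}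
    {p : G.Walk u v} (hp : p.IsPath) {e : Sym2 V} (he : e ∈ p.edges) :
    ¬(G.deleteEdges {e}).Reachable u v := by
  induction e with | h x y =>
  rw [reachable_deleteEdges_iff_exists_walk]
  rintro ⟨q, hq⟩
  classical
  have hpq : q.toPath = ⟨p, hp⟩ := (hG.subsingleton_path u v).elim _ _
  exact hq (q.edges_toPath_subset_edges (by rw [hpq]; exact he))

theorem IsTree.deleteEdges_sup_edge {T : SimpleGraph V} (hT : T.IsTree) {e : Sym2 V}
    (he : e ∈ T.edgeSet) {u v : V} (huv : ¬(T.deleteEdges {e}).Reachable u v) :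
    (T.deleteEdges {e} ⊔ edge u v).IsTree := by
  refine ⟨?_, (hT.isAcyclic.anti (deleteEdges_le _)).sup_edge_of_not_reachable huv⟩
  induction e with | h x y =>
  set D := T.deleteEdges {s(x, y)}
  have hsplit {a b : V} (h : T.Reachable a b) := by
    rw [← deleteEdges_sup_edge_of_adj he] at h
    exact h.sup_edge_cases
  have hmono {a b : V} (h : D.Reachable a b) : (D ⊔ edge u v).Reachable a b :=
    h.mono le_sup_left
  -- the new edge `uv` reconnects the two sides `x` and `y` of the removed edge
  have hxy : (D ⊔ edge u v).Reachable u x ∧ (D ⊔ edge u v).Reachable u y := by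
    grind [hsplit (hT.connected.preconnected u v), reachable_sup_edge, Reachable.trans,
      Reachable.symm]
  refine connected_iff_exists_forall_reachable _ |>.mpr ⟨u, fun a => ?_⟩
  grind [hsplit (hT.connected.preconnected u a), Reachable.trans, Reachable.symm]

end SimpleGraph

open SimpleGraph

variable {S : Finset Pt}

theorem mem_edgesOf {T : SimpleGraph S} {e : Sym2 S} : e ∈ edgesOf S T ↔ e ∈ T.edgeSet := by
  simp [edgesOf]

theorem treeCost_deleteEdges_sup_edge {T : SimpleGraph S} {e : Sym2 S} (he : e ∈ T.edgeSet)
    {u v : S} (huv : u ≠ v) (hnadj : ¬(T.deleteEdges {e}).Adj u v) :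
    treeCost S (T.deleteEdges {e} ⊔ edge u v) = treeCost S T - edgeLen S e + dist (u : Pt) v := by
  have hedges : edgesOf S (T.deleteEdges {e} ⊔ edge u v) =
      insert s(u, v) ((edgesOf S T).erase e) := by
    ext f
    simp only [mem_edgesOf, edgeSet_sup, edgeSet_deleteEdges, edgeSet_edge_of_ne huv,
      Finset.mem_insert, Finset.mem_erase]
    grind
  have hnew : s(u, v) ∉ (edgesOf S T).erase e := by
    simpa [mem_edgesOf, and_comm] using hnadj
  rw [treeCost, treeCost, hedges, Finset.sum_insert hnew,
    ← Finset.sum_erase_add _ _ (mem_edgesOf.mpr he)]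
  simp only [edgeLen, Sym2.lift_mk]
  ring

theorem edgeLen_le_dist_of_mem_path {T : SimpleGraph S} (hT : T.IsTree)
    (hmin : ∀ T' : SimpleGraph S, T'.IsTree → treeCost S T ≤ treeCost S T')
    {u v : S} {p : T.Walk u v} (hp : p.IsPath) {e : Sym2 S} (he : e ∈ p.edges) :
    edgeLen S e ≤ dist (u : Pt) v := by
  have hsplit := hT.isAcyclic.not_reachable_deleteEdges_of_mem_edges hp he
  have heT := p.edges_subset_edgeSet he
  have hcost := hmin _ (hT.deleteEdges_sup_edge heT hsplit)
  rw [treeCost_deleteEdges_sup_edge heT (fun h : u = v => hsplit (h ▸ .rfl))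
    (fun h => hsplit h.reachable)] at hcost
  linarith

theorem reachable_fromRel_dist_le_iff {T : SimpleGraph S} (hT : T.IsTree)
    (hmin : ∀ T' : SimpleGraph S, T'.IsTree → treeCost S T ≤ treeCost S T')
    (t : ℝ) (a b : S) :
    (fromRel fun a b : S => dist (a : Pt) b ≤ t).Reachable a b ↔
      (fromEdgeSet ((edgesOf S T).filter (edgeLen S · ≤ t) : Set (Sym2 S))).Reachable a b := by
  refine ⟨Reachable.of_forall_adj_reachable fun a b hab => ?_, Reachable.mono fun a b hab => ?_⟩
  · obtain ⟨-, hdist⟩ := hab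
    replace hdist : dist (a : Pt) b ≤ t := by simpa only [dist_comm (b : Pt), or_self] using hdist
    obtain ⟨p, hp⟩ := (hT.connected.preconnected a b).exists_isPath
    refine (p.transfer _ fun f hf => ?_).reachable
    have hfT := p.edges_subset_edgeSet hf
    rw [edgeSet_fromEdgeSet, Finset.coe_filter]
    exact ⟨⟨mem_edgesOf.mpr hfT, (edgeLen_le_dist_of_mem_path hT hmin hp hf).trans hdist⟩,
      T.not_isDiag_of_mem_edgeSet hfT⟩
  · simp only [fromEdgeSet_adj, Finset.coe_filter] at hab
    exact ⟨hab.2, .inl hab.1.2⟩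

theorem components_eq_card_sub_mst_edges_general (A : Finset Pt)
    (T : SimpleGraph A) (hT : T.IsTree)
    (hmin : ∀ T' : SimpleGraph A, T'.IsTree → treeCost A T ≤ treeCost A T') :
    (∀ r : ℝ, 0 ≤ r →
      Nat.card (SimpleGraph.fromRel
          (fun a b : A => dist (a : Pt) (b : Pt) ≤ 2 * r)).ConnectedComponent =
        A.card - ((edgesOf A T).filter (fun e => edgeLen A e ≤ 2 * r)).card) ∧
    ∑ e ∈ edgesOf A T, edgeLen A e / 2 = treeCost A T / 2 := by
  refine ⟨fun r _ => ?_, by rw [treeCost, Finset.sum_div]⟩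
  have hforest := hT.isAcyclic.card_connectedComponent_fromEdgeSet_add_card
    (s := (edgesOf A T).filter (edgeLen A · ≤ 2 * r))
    fun e he => mem_edgesOf.mp (Finset.mem_filter.mp he).1
  rw [Nat.card_eq_finsetCard] at hforest
  rw [card_connectedComponent_eq_of_reachable_iff (reachable_fromRel_dist_le_iff hT hmin (2 * r))]
  omega

/-- Let `A ⊆ ℝ²` be finite with distinct pairwise distances and
`T` a Euclidean minimum spanning tree of `A`.  For every `r ≥ 0`, the number of
connected components of the graph on `A` with edges of length at most `2r` equals
`|A|` minus the number of MST edges of length at most `2r`; and the sum of the merge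
radii (half the MST edge lengths) is half the total length of the MST. -/
theorem components_eq_card_sub_mst_edges (A : Finset Pt)
    (hgen : ∀ a ∈ A, ∀ b ∈ A, ∀ c ∈ A, ∀ d ∈ A,
      a ≠ b → c ≠ d → dist a b = dist c d → ({a, b} : Finset Pt) = {c, d})
    (T : SimpleGraph A) (hT : T.IsTree)
    (hmin : ∀ T' : SimpleGraph A, T'.IsTree → treeCost A T ≤ treeCost A T') :
    (∀ r : ℝ, 0 ≤ r →
      Nat.card (SimpleGraph.fromRel
          (fun a b : A => dist (a : Pt) (b : Pt) ≤ 2 * r)).ConnectedComponent =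
        A.card - ((edgesOf A T).filter (fun e => edgeLen A e ≤ 2 * r)).card) ∧
    ∑ e ∈ edgesOf A T, edgeLen A e / 2 = treeCost A T / 2 :=
  components_eq_card_sub_mst_edges_general A T hT hmin
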